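/- (Refined Singleton bound.) Let a regular linear network error correction code over a finite field F with information rate w be given on a network G, and let t be a sink node with 1 ≤ w ≤ C_t. Then the minimum distance satisfies d_min^{(t)} ≤ δ_t + 1, where δ_t = C_t − w. -/

import Mathlib

open scoped BigOperators

/-- Consecutive channels in the list match head-to-tail. -/
def ChainsTo {E V : Type} (tl hd : E → V) (p : List E) : Prop :=
  List.Chain' (fun a b => hd a = tl b) p

/-- `p` is a (nonempty) path from node `i` to node `t`. -/
def IsPathBetween {E V : Type} (tl hd : E → V) (i t : V) (p : List E) : Prop :=
  ChainsTo tl hd p ∧ (∃ e ∈ p.head?, tl e = i) ∧ (∃ e ∈ p.getLast?, hd e = t)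

/-- `C` is a cut between `i` and `t`: every path from `i` to `t` meets `C`. -/
def IsCut {E V : Type} (tl hd : E → V) (i t : V) (C : Finset E) : Prop :=
  ∀ p : List E, IsPathBetween tl hd i t p → ∃ e ∈ p, e ∈ C

/-- The minimum cut capacity between `i` and `t`. -/
noncomputable def minCutGen {E V : Type} (tl hd : E → V) (i t : V) : ℕ :=
  sInf {n | ∃ C : Finset E, IsCut tl hd i t C ∧ C.card = n}

/-- A single-source finite acyclic directed multigraph network. -/
structure Network where
  V : Type
  E : Type
  [fintV : Fintype V]
  [fintE : Fintype E]
  [decV : DecidableEq V]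
  [decE : DecidableEq E]
  tl : E → V
  hd : E → V
  s : V
  T : Finset V
  s_not_sink : s ∉ T
  source_no_in : ∀ e, hd e ≠ s
  sink_no_out : ∀ e, tl e ∉ T
  acyclic : ∀ p : List E, ChainsTo tl hd p →
    ∀ e ∈ p.head?, ∀ e' ∈ p.getLast?, hd e' ≠ tl e

attribute [instance] Network.fintV Network.fintE Network.decV Network.decE

namespace Network

/-- The minimum cut capacity `C_t` between the source `s` and `t`. -/
noncomputable def minCut (G : Network) (t : G.V) : ℕ :=
  minCutGen G.tl G.hd G.s t

/-- `rank_t(ρ)`: the minimum cut capacity between the new node `s_ρ` (= `none`) and `t`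
in the network where every channel of `ρ` is redirected to start at `s_ρ`. -/
noncomputable def rankOf (G : Network) (t : G.V) (ρ : Finset G.E) : ℕ :=
  minCutGen (fun e => if e ∈ ρ then (none : Option G.V) else some (G.tl e))
    (fun e => some (G.hd e)) (none : Option G.V) (some t)

/-- `R_t(b)`: the set of error patterns `ρ` with `|ρ| = rank_t(ρ) = b`. -/
def R (G : Network) (t : G.V) (b : ℕ) : Set (Finset G.E) :=
  {ρ | ρ.card = b ∧ G.rankOf t ρ = b}

/-- `E_t`: the set of channels connective with `t`, i.e. from which a path ends at `t`. -/
def Econn (G : Network) (t : G.V) : Set G.E :=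
  {e | ∃ p : List G.E, ChainsTo G.tl G.hd p ∧ p.head? = some e ∧
        ∃ e' ∈ p.getLast?, G.hd e' = t}

/-- `|J|`: the number of internal nodes. -/
noncomputable def internalCard (G : Network) : ℕ :=
  (Finset.univ \ insert G.s G.T).card

end Network

/-- A linear network error correction code for information rate `w`: local encoding
coefficients together with the extended global encoding kernels `f`, which satisfy the
defining recursion.  The coordinates of the kernels are indexed by `In(s) ∪ E`,
where `In(s)` consists of the `w` imaginary message channels. -/
structure NECCode (G : Network) (F : Type) [Field F] (w : ℕ) where
  k : G.E → G.E → F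
  ksrc : Fin w → G.E → F
  f : G.E → (Fin w ⊕ G.E) → F
  f_eq : ∀ e : G.E,
    f e = (∑ d ∈ Finset.univ.filter (fun d => G.hd d = G.tl e), k d e • f d)
      + (if G.tl e = G.s then
          ∑ i : Fin w, ksrc i e • (Pi.single (Sum.inl i) (1 : F) : (Fin w ⊕ G.E) → F)
         else 0)
      + (Pi.single (Sum.inr e) (1 : F) : (Fin w ⊕ G.E) → F)

namespace NECCode

variable {G : Network} {F : Type} [Field F] {w : ℕ}

/-- `row_t(d)`: the row of the decoding matrix `F̃_t` indexed by `d ∈ In(s) ∪ E`. -/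
def rowt (C : NECCode G F w) (t : G.V) (d : Fin w ⊕ G.E) : {e : G.E // G.hd e = t} → F :=
  fun e => C.f e.1 d

/-- The message space `Φ(t)`. -/
def Phi (C : NECCode G F w) (t : G.V) : Submodule F ({e : G.E // G.hd e = t} → F) :=
  Submodule.span F (Set.range fun i : Fin w => C.rowt t (Sum.inl i))

/-- The error space `Δ(t, ρ)` of the error pattern `ρ`. -/
def Delta (C : NECCode G F w) (t : G.V) (ρ : Finset G.E) :
    Submodule F ({e : G.E // G.hd e = t} → F) :=
  Submodule.span F ((fun d => C.rowt t (Sum.inr d)) '' (ρ : Set G.E))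

/-- A code is regular if `dim Φ(t) = w` for every sink node. -/
def Regular (C : NECCode G F w) : Prop :=
  ∀ t ∈ G.T, Module.finrank F (C.Phi t) = w

/-- The minimum distance `d_min^{(t)}` at the sink node `t`. -/
noncomputable def dmin (C : NECCode G F w) (t : G.V) : ℕ :=
  sInf {n | ∃ ρ : Finset G.E, G.rankOf t ρ = n ∧ C.Delta t ρ ⊓ C.Phi t ≠ ⊥}

end NECCode

/-!
Let `CT` be a minimum cut between `s` and `t`. The row of a channel `e ∉ CT` with `head e ≠ t` is
a combination of the rows of the channels leaving `head e`, and a message row is a combination of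
the rows of the channels leaving `s`; following paths downstream until they meet `CT` gives
`Φ(t) ≤ Δ(t, CT)`. Split `CT` into `ρ` with `δ_t + 1` channels and the rest, with `w - 1`. If
`Δ(t, ρ) ∩ Φ(t) = 0`, the `w`-dimensional `Φ(t)` would embed into
`(Δ(t, ρ) + Δ(t, CT \ ρ)) / Δ(t, ρ)`, of dimension at most `w - 1`.
So `d_min ≤ rank_t(ρ) ≤ |ρ| = δ_t + 1`.
-/

section MinCut

variable {E V : Type} (tl hd : E → V) (i t : V)

lemma isCut_univ [Fintype E] : IsCut tl hd i t Finset.univ := by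
  rintro p ⟨-, ⟨e, he, -⟩, -⟩
  exact ⟨e, List.mem_of_mem_head? he, Finset.mem_univ e⟩

variable {tl hd i t}

lemma minCutGen_le_card {CT : Finset E} (h : IsCut tl hd i t CT) :
    minCutGen tl hd i t ≤ CT.card :=
  Nat.sInf_le ⟨CT, h, rfl⟩

lemma exists_isCut_card_eq_minCutGen [Fintype E] :
    ∃ CT : Finset E, IsCut tl hd i t CT ∧ CT.card = minCutGen tl hd i t :=
  Nat.sInf_mem (s := {n | ∃ CT : Finset E, IsCut tl hd i t CT ∧ CT.card = n})
    ⟨_, Finset.univ, isCut_univ tl hd i t, rfl⟩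

end MinCut

lemma Submodule.inf_ne_bot_of_le_sup {K V : Type*} [DivisionRing K] [AddCommGroup V]
    [Module K V] [FiniteDimensional K V] {P A B : Submodule K V} (hP : P ≤ A ⊔ B)
    (hB : Module.finrank K B < Module.finrank K P) : A ⊓ P ≠ ⊥ := by
  intro hAP
  have hdim := Submodule.finrank_sup_add_finrank_inf_eq A P
  rw [hAP, finrank_bot] at hdim
  have hmono := Submodule.finrank_mono (sup_le le_sup_left hP : A ⊔ P ≤ A ⊔ B)
  have hsub := Submodule.finrank_add_le_finrank_add_finrank A B
  omega

namespace Network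

variable (G : Network)

def Feeds (a b : G.E) : Prop := G.hd a = G.tl b

lemma not_transGen_feeds_self (a : G.E) : ¬ Relation.TransGen G.Feeds a a := by
  intro h
  obtain ⟨b, hab, hba⟩ := Relation.TransGen.tail'_iff.mp h
  obtain ⟨l, hl, hlast⟩ := List.exists_isChain_cons_of_relationReflTransGen hab
  exact G.acyclic (a :: l) hl a rfl b (by simp [List.getLast?_eq_some_getLast, hlast]) hba

lemma wellFounded_feeds : WellFounded G.Feeds :=
  have : Std.Irrefl (Relation.TransGen G.Feeds) := ⟨G.not_transGen_feeds_self⟩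
  Subrelation.wf Relation.TransGen.single (Finite.wellFounded_of_trans_of_irrefl _)

lemma wellFounded_swap_feeds : WellFounded (Function.swap G.Feeds) :=
  have : Std.Irrefl (Relation.TransGen (Function.swap G.Feeds)) :=
    ⟨fun a h => G.not_transGen_feeds_self a (Relation.transGen_swap.mp h)⟩
  Subrelation.wf Relation.TransGen.single (Finite.wellFounded_of_trans_of_irrefl _)

lemma rankOf_le_card (t : G.V) (ρ : Finset G.E) : G.rankOf t ρ ≤ ρ.card := by
  refine minCutGen_le_card fun p ⟨_, ⟨e, he, hte⟩, _⟩ => ⟨e, List.mem_of_mem_head? he, ?_⟩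
  by_contra hρ
  simp [hρ] at hte

lemma exists_isCut_card_eq_minCut (t : G.V) :
    ∃ CT : Finset G.E, IsCut G.tl G.hd G.s t CT ∧ CT.card = G.minCut t :=
  exists_isCut_card_eq_minCutGen

def Separates (CT : Finset G.E) (e : G.E) (t : G.V) : Prop :=
  ∀ p : List G.E, ChainsTo G.tl G.hd p → p.head? = some e →
    (∃ e' ∈ p.getLast?, G.hd e' = t) → ∃ c ∈ p, c ∈ CT

variable {G} {CT : Finset G.E} {e : G.E} {t : G.V}

lemma Separates.hd_ne (h : G.Separates CT e t) (he : e ∉ CT) : G.hd e ≠ t := by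
  intro hdt
  obtain ⟨c, hc, hcCT⟩ := h [e] (List.isChain_singleton e) rfl ⟨e, rfl, hdt⟩
  rw [List.mem_singleton.mp hc] at hcCT
  exact he hcCT

lemma Separates.of_feeds (h : G.Separates CT e t) (he : e ∉ CT) {g : G.E} (hg : G.Feeds e g) :
    G.Separates CT g t := by
  rintro (_ | ⟨g', q⟩) hp hph hpl
  · simp at hph
  obtain rfl : g' = g := Option.some.inj hph
  obtain ⟨c, hc, hcCT⟩ := h (e :: g' :: q) (List.IsChain.cons_cons hg hp) rfl
    (by rwa [List.getLast?_cons_cons])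
  rcases List.mem_cons.mp hc with rfl | hc
  · exact absurd hcCT he
  · exact ⟨c, hc, hcCT⟩

lemma separates_of_isCut (hcut : IsCut G.tl G.hd G.s t CT) {d : G.E} (hd : G.tl d = G.s) :
    G.Separates CT d t :=
  fun p hp hph hpl => hcut p ⟨hp, ⟨d, hph, hd⟩, hpl⟩

end Network

namespace NECCode

variable {G : Network} {F : Type} [Field F] {w : ℕ} (C : NECCode G F w)

lemma f_inr_apply (a b : G.E) :
    C.f a (Sum.inr b) =
      (∑ d ∈ Finset.univ.filter (fun d => G.hd d = G.tl a), C.k d a * C.f d (Sum.inr b))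
        + if b = a then 1 else 0 := by
  conv_lhs => rw [C.f_eq a]
  simp [Finset.sum_apply, Pi.single_apply,
    apply_ite (fun g : (Fin w ⊕ G.E) → F => g (Sum.inr b))]

lemma f_inl_apply (a : G.E) (i : Fin w) :
    C.f a (Sum.inl i) =
      (∑ d ∈ Finset.univ.filter (fun d => G.hd d = G.tl a), C.k d a * C.f d (Sum.inl i))
        + if G.tl a = G.s then C.ksrc i a else 0 := by
  conv_lhs => rw [C.f_eq a]
  simp [Finset.sum_apply, Pi.single_apply,
    apply_ite (fun g : (Fin w ⊕ G.E) → F => g (Sum.inl i))]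

lemma sum_in_mul_f_inr (a b : G.E) :
    (∑ d ∈ Finset.univ.filter (fun d => G.hd d = G.tl a), C.k d a * C.f d (Sum.inr b))
      = C.f a (Sum.inr b) - if b = a then 1 else 0 := by
  rw [C.f_inr_apply a b]; ring

/-- `C.f e' (Sum.inr e)` is the sum over paths from `e` to `e'` of the products of local
coefficients; the defining recursion splits off the last channel of such a path, this identity
splits off the first one. -/
lemma f_inr_eq_sum_out (e e' : G.E) :
    C.f e' (Sum.inr e) = (if e = e' then 1 else 0)
      + ∑ g ∈ Finset.univ.filter (fun g => G.tl g = G.hd e), C.k e g * C.f e' (Sum.inr g) := by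
  induction e' using G.wellFounded_feeds.induction with
  | _ x IH =>
  rw [C.f_inr_apply x e, Finset.sum_congr rfl fun d hd =>
    by rw [IH d (Finset.mem_filter.mp hd).2]]
  simp_rw [mul_add, Finset.sum_add_distrib, mul_ite, mul_one, mul_zero, Finset.sum_ite_eq,
    Finset.mul_sum]
  rw [Finset.sum_comm]
  simp_rw [mul_left_comm, ← Finset.mul_sum, C.sum_in_mul_f_inr x, mul_sub,
    Finset.sum_sub_distrib, mul_ite, mul_one, mul_zero, Finset.sum_ite_eq']
  have hfeeds : (x ∈ Finset.univ.filter fun g => G.tl g = G.hd e)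
      ↔ (e ∈ Finset.univ.filter fun d => G.hd d = G.tl x) := by
    simp [eq_comm]
  rw [if_congr hfeeds rfl rfl]
  ring

lemma f_inl_eq_sum_source (i : Fin w) (e : G.E) :
    C.f e (Sum.inl i) = ∑ d ∈ Finset.univ.filter (fun d => G.tl d = G.s),
      C.ksrc i d * C.f e (Sum.inr d) := by
  induction e using G.wellFounded_feeds.induction with
  | _ x IH =>
  rw [C.f_inl_apply x i, Finset.sum_congr rfl fun d hd =>
    by rw [IH d (Finset.mem_filter.mp hd).2, Finset.mul_sum]]
  rw [Finset.sum_comm]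
  simp_rw [mul_left_comm (C.k _ x), ← Finset.mul_sum, C.sum_in_mul_f_inr x, mul_sub,
    Finset.sum_sub_distrib, mul_ite, mul_one, mul_zero, Finset.sum_ite_eq', Finset.mem_filter,
    Finset.mem_univ, true_and]
  ring

lemma finrank_Delta_le_card (t : G.V) (ρ : Finset G.E) :
    Module.finrank F (C.Delta t ρ) ≤ ρ.card := by
  classical
  rw [Delta, ← Finset.coe_image]
  exact (finrank_span_finset_le_card _).trans Finset.card_image_le

variable {t : G.V}

lemma rowt_inr_eq_sum_out {e : G.E} (he : G.hd e ≠ t) :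
    C.rowt t (Sum.inr e) = ∑ g ∈ Finset.univ.filter (fun g => G.tl g = G.hd e),
      C.k e g • C.rowt t (Sum.inr g) := by
  funext e'
  have hne : e ≠ e'.1 := fun h => he (h ▸ e'.2)
  simp only [rowt, Finset.sum_apply, Pi.smul_apply, smul_eq_mul]
  rw [C.f_inr_eq_sum_out, if_neg hne, zero_add]

lemma rowt_inl_eq_sum_source (i : Fin w) :
    C.rowt t (Sum.inl i) = ∑ d ∈ Finset.univ.filter (fun d => G.tl d = G.s),
      C.ksrc i d • C.rowt t (Sum.inr d) := by
  funext e'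
  simp only [rowt, Finset.sum_apply, Pi.smul_apply, smul_eq_mul]
  exact C.f_inl_eq_sum_source i e'.1

lemma rowt_inr_mem_Delta {CT : Finset G.E} {e : G.E} (h : G.Separates CT e t) :
    C.rowt t (Sum.inr e) ∈ C.Delta t CT := by
  induction e using G.wellFounded_swap_feeds.induction with
  | _ x IH =>
  by_cases hx : x ∈ CT
  · exact Submodule.subset_span ⟨x, hx, rfl⟩
  rw [C.rowt_inr_eq_sum_out (h.hd_ne hx)]
  refine Submodule.sum_mem _ fun g hg => Submodule.smul_mem _ _ ?_
  have hfeeds : G.Feeds x g := (Finset.mem_filter.mp hg).2.symm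
  exact IH g hfeeds (h.of_feeds hx hfeeds)

lemma Phi_le_Delta_of_isCut {CT : Finset G.E} (hcut : IsCut G.tl G.hd G.s t CT) :
    C.Phi t ≤ C.Delta t CT := by
  refine Submodule.span_le.mpr (Set.range_subset_iff.mpr fun i => ?_)
  rw [SetLike.mem_coe, C.rowt_inl_eq_sum_source]
  exact Submodule.sum_mem _ fun d hd => Submodule.smul_mem _ _
    (C.rowt_inr_mem_Delta (G.separates_of_isCut hcut (Finset.mem_filter.mp hd).2))

lemma Delta_union (ρ σ : Finset G.E) : C.Delta t (ρ ∪ σ) = C.Delta t ρ ⊔ C.Delta t σ := by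
  simp only [Delta, Finset.coe_union, Set.image_union, Submodule.span_union]

lemma dmin_le_rankOf {ρ : Finset G.E} (h : C.Delta t ρ ⊓ C.Phi t ≠ ⊥) :
    C.dmin t ≤ G.rankOf t ρ :=
  Nat.sInf_le ⟨ρ, rfl, h⟩

end NECCode

theorem statement1_general (G : Network) (F : Type) [Field F] (w : ℕ)
    (C : NECCode G F w) (hreg : C.Regular) (hw1 : 1 ≤ w)
    (t : G.V) (ht : t ∈ G.T) (hwC : w ≤ G.minCut t) :
    C.dmin t ≤ (G.minCut t - w) + 1 := by
  obtain ⟨CT, hcut, hCT⟩ := G.exists_isCut_card_eq_minCut t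
  obtain ⟨ρ, hρCT, hρ⟩ := Finset.exists_subset_card_eq
    (show G.minCut t - w + 1 ≤ CT.card by rw [hCT]; omega)
  have hΦ : C.Phi t ≤ C.Delta t ρ ⊔ C.Delta t (CT \ ρ) := by
    rw [← C.Delta_union, Finset.union_sdiff_of_subset hρCT]
    exact C.Phi_le_Delta_of_isCut hcut
  have hrest : Module.finrank F (C.Delta t (CT \ ρ)) < Module.finrank F (C.Phi t) := by
    have := C.finrank_Delta_le_card t (CT \ ρ)
    rw [Finset.card_sdiff_of_subset hρCT, hρ, hCT] at this
    rw [hreg t ht]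
    omega
  calc C.dmin t ≤ G.rankOf t ρ := C.dmin_le_rankOf (Submodule.inf_ne_bot_of_le_sup hΦ hrest)
    _ ≤ ρ.card := G.rankOf_le_card t ρ
    _ = G.minCut t - w + 1 := hρ

theorem statement1 (G : Network) (F : Type) [Field F] [Fintype F] (w : ℕ)
    (C : NECCode G F w) (hreg : C.Regular) (hw1 : 1 ≤ w)
    (t : G.V) (ht : t ∈ G.T) (hwC : w ≤ G.minCut t) :
    C.dmin t ≤ (G.minCut t - w) + 1 :=
  statement1_general G F w C hreg hw1 t ht hwC
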